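/- (Theorem 1.6(a)) Let A, B be subspaces of E and o an E-orbit contained in X_A. Then [[oB]], the ℂ-span of 𝓑_{oB} in 𝓕, is a right ideal of the algebra (𝓕, ⋆); more precisely, for any E-orbit 𝒪 in X²_{AB} with p₁𝒪 = o and any ε₁ ∈ (A∩B)*, one has [[oB]] = [𝒪]^{ε₁} ⋆ 𝓕. -/

import Mathlib

/-!
Call a function on `X²_{AC} × (A∩C)*` an `(o, B)`-kernel if it is supported on `o × X_C` and
constant on every set `𝓜 × α̃` with `𝓜` an `E × B`-orbit and `α̃` a fibre of the restriction to
`A∩B∩C`. Such a function is a combination of elements of `𝓑_{oBC}`, and kernels stay kernels under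
right multiplication by `𝓕`: reindexing the middle point by `e` absorbs the `E`-action, and a
linear form on `A∩C` that vanishes on `A∩B∩C` and is prescribed on `A∩C∩D` absorbs a change of `ε`
inside its fibre. Hence `[[oB]]` is a right ideal, and it contains `[𝒪]^{ε₁}`, which is the element
of `𝓑_{oBB}` for `𝓜 = 𝒪`.

Conversely, let `(x, y) ∈ 𝒪` and let `(x, z)` lie in the orbit `𝓜` of a generator. Multiplying
`[𝒪]^{ε₁}` by the indicator of the `E`-orbit of `(y, z)` on a suitable fibre of `(B∩C)*` gives a
kernel that vanishes off `𝓜 × α̃` and is positive at one point, hence a nonzero multiple of the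
generator.
-/

open scoped Classical

set_option linter.unusedSectionVars false

noncomputable section

namespace Lusztig

variable (E X : Type) [AddCommGroup E] [Module (ZMod 2) E] [Fintype E]
  [Fintype X] [AddAction E X]

/-- The stabilizer of `x` in `E`, as a subset of `E`. -/
def stabSet (x : X) : Set E := {e : E | e +ᵥ x = x}

/-- `X_A`: the set of points of `X` whose stabilizer in `E` equals `A`. -/
def XA (A : Submodule (ZMod 2) E) : Set X := {x : X | stabSet E X x = (A : Set E)}

/-- `X²_{AB} = X_A × X_B`. -/
def X2 (A B : Submodule (ZMod 2) E) : Set (X × X) := (XA E X A) ×ˢ (XA E X B)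

/-- The `E`-orbit of `x` in `X`. -/
def orb (x : X) : Set X := {y : X | ∃ e : E, y = e +ᵥ x}

/-- The `E`-orbit of `(x,y)` for the diagonal action of `E` on `X × X`. -/
def orb2 (x y : X) : Set (X × X) := {q : X × X | ∃ e : E, q = (e +ᵥ x, e +ᵥ y)}

/-- `O` is an `E`-orbit (for the diagonal action) contained in `X²_{AB}`. -/
def IsOrb2 (A B : Submodule (ZMod 2) E) (O : Set (X × X)) : Prop :=
  ∃ x y : X, x ∈ XA E X A ∧ y ∈ XA E X B ∧ O = orb2 E X x y

/-- The `E × B`-orbit of `(x,y)` for the action `(e,b)·(x,y) = (e+b+x, e+y)`. -/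
def orbEB (B : Submodule (ZMod 2) E) (x y : X) : Set (X × X) :=
  {q : X × X | ∃ e b : E, b ∈ B ∧ q = ((e + b) +ᵥ x, e +ᵥ y)}

/-- `M` is an `E × B`-orbit contained in `X²_{AC}` for the action
`(e,b)·(x,y) = (e+b+x, e+y)`. -/
def IsOrbEB (A B C : Submodule (ZMod 2) E) (M : Set (X × X)) : Prop :=
  ∃ x y : X, x ∈ XA E X A ∧ y ∈ XA E X C ∧ M = orbEB E X B x y

/-- Image under the first projection. -/
def p1 (S : Set (X × X)) : Set X := Prod.fst '' S

/-- Image under the second projection. -/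
def p2 (S : Set (X × X)) : Set X := Prod.snd '' S

/-- `U_{ABC} = {(a,b,c) ∈ A × B × C : a + b + c = 0}`. -/
def UABC (A B C : Submodule (ZMod 2) E) : Set (E × E × E) :=
  {t : E × E × E | t.1 ∈ A ∧ t.2.1 ∈ B ∧ t.2.2 ∈ C ∧ t.1 + t.2.1 + t.2.2 = 0}

/-- `X̄_C`: the set of `E`-orbits contained in `X_C`. -/
def barX (C : Submodule (ZMod 2) E) : Set (Set X) :=
  {s : Set X | ∃ x ∈ XA E X C, s = orb E X x}

/-- The dual (space of linear forms `P → ℤ/2`) of a subspace `P` of `E`. -/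
abbrev Dl (P : Submodule (ZMod 2) E) : Type := ↥P →ₗ[ZMod 2] ZMod 2

/-- Restriction of a linear form along an inclusion of subspaces. -/
def res {P Q : Submodule (ZMod 2) E} (h : P ≤ Q) (φ : Dl E Q) : Dl E P :=
  φ.comp (Submodule.inclusion h)

theorem leAB (A B C : Submodule (ZMod 2) E) : A ⊓ B ⊓ C ≤ A ⊓ B := inf_le_left
theorem leBC (A B C : Submodule (ZMod 2) E) : A ⊓ B ⊓ C ≤ B ⊓ C :=
  le_inf (inf_le_left.trans inf_le_right) inf_le_right
theorem leAC (A B C : Submodule (ZMod 2) E) : A ⊓ B ⊓ C ≤ A ⊓ C :=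
  le_inf (inf_le_left.trans inf_le_left) inf_le_right
theorem leBA (A B : Submodule (ZMod 2) E) : A ⊓ B ≤ B ⊓ A := le_inf inf_le_right inf_le_left

/-- The convolution product `𝓕_{AB} × 𝓕_{BC} → 𝓕_{AC}`. -/
def conv (A B C : Submodule (ZMod 2) E)
    (f₁ : (X × X) × Dl E (A ⊓ B) → ℂ) (f₂ : (X × X) × Dl E (B ⊓ C) → ℂ) :
    (X × X) × Dl E (A ⊓ C) → ℂ :=
  fun p =>
    (∑ᶠ (y : X) (_ : y ∈ XA E X B) (ε₁ : Dl E (A ⊓ B)) (ε₂ : Dl E (B ⊓ C))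
        (_ : res E (leAB E A B C) ε₁ + res E (leBC E A B C) ε₂
              + res E (leAC E A B C) p.2 = 0),
        f₁ ((p.1.1, y), ε₁) * f₂ ((y, p.1.2), ε₂)) *
      (Nat.card ↥(A ⊓ B ⊓ C) : ℂ) / (Nat.card ↥(A ⊓ C) : ℂ)

/-- The defining conditions for membership in `𝓕_{AB}`: supported on `X²_{AB}` and
invariant under the diagonal `E`-action. -/
def MemF (A B : Submodule (ZMod 2) E) (f : (X × X) × Dl E (A ⊓ B) → ℂ) : Prop :=
  (∀ p : (X × X) × Dl E (A ⊓ B), p.1 ∉ X2 E X A B → f p = 0) ∧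
  (∀ (e : E) (x y : X) (ε : Dl E (A ⊓ B)), f ((e +ᵥ x, e +ᵥ y), ε) = f ((x, y), ε))

/-- `𝓕_{AB}` as a subspace of the space of all functions. -/
def FAB (A B : Submodule (ZMod 2) E) : Submodule ℂ ((X × X) × Dl E (A ⊓ B) → ℂ) where
  carrier := {f | MemF E X A B f}
  add_mem' := by
    intro a b ha hb
    exact ⟨fun p hp => by simp [ha.1 p hp, hb.1 p hp],
      fun e x y ε => by simp [Pi.add_apply, ha.2 e x y ε, hb.2 e x y ε]⟩
  zero_mem' := ⟨fun p hp => rfl, fun e x y ε => rfl⟩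
  smul_mem' := by
    intro c a ha
    exact ⟨fun p hp => by simp [Pi.smul_apply, ha.1 p hp],
      fun e x y ε => by simp [Pi.smul_apply, ha.2 e x y ε]⟩

/-- `[Ξ]^ε`. -/
def br (A B : Submodule (ZMod 2) E) (Ξ : Set (X × X)) (ε : Dl E (A ⊓ B)) :
    (X × X) × Dl E (A ⊓ B) → ℂ :=
  fun p => if p.1 ∈ Ξ ∧ p.2 = ε then 1 else 0

/-- The ambient space of `𝓕 = ⊕_{A,B} 𝓕_{AB}` (all summands at once). -/
abbrev FF : Type := ∀ A B : Submodule (ZMod 2) E, (X × X) × Dl E (A ⊓ B) → ℂ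

/-- The embedding of the `(A,B)` summand into `𝓕`. -/
def emb (A B : Submodule (ZMod 2) E) (f : (X × X) × Dl E (A ⊓ B) → ℂ) : FF E X :=
  fun A' B' p =>
    if h : A = A' ∧ B = B' then f (p.1, cast (by rw [h.1, h.2]) p.2) else 0

/-- `𝓕` as a subspace of `FF`: componentwise supported on `X²_{AB}` and `E`-invariant. -/
def FFsub : Submodule ℂ (FF E X) where
  carrier := {g | ∀ A B, MemF E X A B (g A B)}
  add_mem' := by
    intro a b ha hb A B
    exact ⟨fun p hp => by simp [(ha A B).1 p hp, (hb A B).1 p hp],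
      fun e x y ε => by simp [(ha A B).2 e x y ε, (hb A B).2 e x y ε]⟩
  zero_mem' := fun A B => ⟨fun p hp => rfl, fun e x y ε => rfl⟩
  smul_mem' := by
    intro c a ha A B
    exact ⟨fun p hp => by simp [(ha A B).1 p hp],
      fun e x y ε => by simp [(ha A B).2 e x y ε]⟩

/-- The product on `𝓕` (zero between summands `𝓕_{AB}`, `𝓕_{B'C}` with `B ≠ B'`). -/
def mulFF (g h : FF E X) : FF E X :=
  fun A C => ∑ᶠ B : Submodule (ZMod 2) E, conv E X A B C (g A B) (h B C)

/-- The diagonal `Δ_A ⊆ X²_{AA}`. -/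
def diagSet (A : Submodule (ZMod 2) E) : Set (X × X) :=
  {q : X × X | q.1 ∈ XA E X A ∧ q.2 = q.1}

/-- The element `∑_A [Δ_A]^0` of `𝓕`. -/
def unitFF : FF E X :=
  ∑ᶠ A : Submodule (ZMod 2) E, emb E X A A (br E X A A (diagSet E X A) 0)

/-- The map `f ↦ f^#` on `𝓕`. -/
def shFF (g : FF E X) : FF E X :=
  fun A B p => g B A ((p.1.2, p.1.1), res E (leBA E B A) p.2)

/-- `𝒪 • 𝒪'`. -/
def bullet (O O' : Set (X × X)) : Set (X × X) :=
  {q : X × X | ∃ y : X, (q.1, y) ∈ O ∧ (y, q.2) ∈ O'}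

/-- `∑_{ε ∈ α̃} [𝓜]^ε ∈ 𝓕_{AC}`, where `α̃` is the fibre of
`(A∩C)* → (A∩B∩C)*` over `α`. -/
def bSum (A B C : Submodule (ZMod 2) E) (M : Set (X × X)) (α : Dl E (A ⊓ B ⊓ C)) :
    (X × X) × Dl E (A ⊓ C) → ℂ :=
  ∑ᶠ (ε : Dl E (A ⊓ C)) (_ : res E (leAC E A B C) ε = α), br E X A C M ε

/-- The set `𝓑_{oBC} ⊆ 𝓕` (embedded in `FF`). -/
def BoBC (A B C : Submodule (ZMod 2) E) (o : Set X) : Set (FF E X) :=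
  {g | ∃ (M : Set (X × X)) (α : Dl E (A ⊓ B ⊓ C)),
      IsOrbEB E X A B C M ∧ p1 X M = o ∧ g = emb E X A C (bSum E X A B C M α)}

/-- The set `𝓑_{oB} = ⊔_C 𝓑_{oBC}`. -/
def BoB (A B : Submodule (ZMod 2) E) (o : Set X) : Set (FF E X) :=
  ⋃ C : Submodule (ZMod 2) E, BoBC E X A B C o

/-- `[[oB]]`, the `ℂ`-span of `𝓑_{oB}`. -/
def ooB (A B : Submodule (ZMod 2) E) (o : Set X) : Submodule ℂ (FF E X) :=
  Submodule.span ℂ (BoB E X A B o)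

instance (P : Submodule (ZMod 2) E) : Finite (Dl E P) :=
  Finite.of_injective _ DFunLike.coe_injective

instance (P : Submodule (ZMod 2) E) : Fintype (Dl E P) := Fintype.ofFinite _

instance : Fintype (Submodule (ZMod 2) E) := Fintype.ofFinite _

lemma exists_extend_eq_zero_on_of_eq_zero_on_inf {K V V' : Type*} [DivisionRing K]
    [AddCommGroup V] [Module K V] [AddCommGroup V'] [Module K V'] {P Q : Submodule K V}
    (φ : Q →ₗ[K] V') (hφ : ∀ v : Q, (v : V) ∈ P → φ v = 0) :
    ∃ ψ : V →ₗ[K] V', (∀ v ∈ P, ψ v = 0) ∧ ψ ∘ₗ Q.subtype = φ := by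
  have H : ∀ (v : P) (w : Q), (v : V) = w → (0 : P →ₗ[K] V') v = φ w :=
    fun v w h => (hφ w (h ▸ v.2)).symm
  obtain ⟨ψ, hψ⟩ := LinearMap.exists_extend (LinearPMap.sup ⟨P, 0⟩ ⟨Q, φ⟩ H).toFun
  refine ⟨ψ, fun v hv => ?_, LinearMap.ext fun v => ?_⟩
  · have h := LinearMap.congr_fun hψ ⟨v, Submodule.mem_sup_left hv⟩
    have h' := LinearPMap.sup_apply (f := ⟨P, 0⟩) (g := ⟨Q, φ⟩) H ⟨v, hv⟩ 0
      ⟨v, Submodule.mem_sup_left hv⟩ (by simp)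
    simpa using h.trans h'
  · have h := LinearMap.congr_fun hψ ⟨v, Submodule.mem_sup_right v.2⟩
    have h' := LinearPMap.sup_apply (f := ⟨P, 0⟩) (g := ⟨Q, φ⟩) H 0 v
      ⟨v, Submodule.mem_sup_right v.2⟩ (by simp)
    simpa using h.trans h'

section

variable {E X}

lemma stabSet_vadd (e : E) (x : X) : stabSet E X (e +ᵥ x) = stabSet E X x := by
  ext f
  simp only [stabSet, Set.mem_ofPred_eq, vadd_comm f e x, vadd_left_cancel_iff]

lemma vadd_mem_XA_iff {A : Submodule (ZMod 2) E} (e : E) (x : X) :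
    e +ᵥ x ∈ XA E X A ↔ x ∈ XA E X A := by
  simp only [XA, Set.mem_ofPred_eq, stabSet_vadd]

lemma vadd_eq_self_of_mem {A : Submodule (ZMod 2) E} {x : X} (hx : x ∈ XA E X A) {a : E}
    (ha : a ∈ A) : a +ᵥ x = x := by
  rw [XA, Set.mem_ofPred_eq] at hx
  exact (hx ▸ ha : a ∈ stabSet E X x)

lemma sub_mem_of_vadd_eq {A : Submodule (ZMod 2) E} {x : X} (hx : x ∈ XA E X A) {e e' : E}
    (h : e +ᵥ x = e' +ᵥ x) : e - e' ∈ A := by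
  rw [XA, Set.mem_ofPred_eq] at hx
  rw [← SetLike.mem_coe, ← hx, stabSet, Set.mem_ofPred_eq, sub_eq_add_neg, add_comm, add_vadd,
    h, neg_vadd_vadd]

lemma mem_orbEB {B : Submodule (ZMod 2) E} {x y u v : X} :
    (u, v) ∈ orbEB E X B x y ↔ ∃ e b, b ∈ B ∧ u = (e + b) +ᵥ x ∧ v = e +ᵥ y := by
  simp only [orbEB, Set.mem_ofPred_eq, Prod.mk.injEq]

lemma mem_orbEB_self (B : Submodule (ZMod 2) E) (x y : X) : (x, y) ∈ orbEB E X B x y :=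
  ⟨0, 0, B.zero_mem, by simp⟩

lemma orbEB_subset_of_mem {B : Submodule (ZMod 2) E} {x y x' y' : X}
    (h : (x', y') ∈ orbEB E X B x y) : orbEB E X B x' y' ⊆ orbEB E X B x y := by
  obtain ⟨e, b, hb, rfl, rfl⟩ := mem_orbEB.1 h
  rintro ⟨u, v⟩ huv
  obtain ⟨e', b', hb', rfl, rfl⟩ := mem_orbEB.1 huv
  refine mem_orbEB.2 ⟨e' + e, b' + b, B.add_mem hb' hb, ?_, (add_vadd e' e y).symm⟩
  rw [vadd_vadd]
  abel_nf

lemma mem_orbEB_comm {B : Submodule (ZMod 2) E} {x y u v : X} :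
    (u, v) ∈ orbEB E X B x y → (x, y) ∈ orbEB E X B u v := by
  rw [mem_orbEB, mem_orbEB]
  rintro ⟨e, b, hb, rfl, rfl⟩
  refine ⟨-e, -b, B.neg_mem hb, ?_, by rw [neg_vadd_vadd]⟩
  rw [vadd_vadd, show -e + -b + (e + b) = 0 by abel, zero_vadd]

lemma orbEB_eq_of_mem {B : Submodule (ZMod 2) E} {x y x' y' : X}
    (h : (x', y') ∈ orbEB E X B x y) : orbEB E X B x' y' = orbEB E X B x y :=
  (orbEB_subset_of_mem h).antisymm (orbEB_subset_of_mem (mem_orbEB_comm h))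

lemma mem_orbEB_iff_eq {B : Submodule (ZMod 2) E} {x y u v : X} :
    (u, v) ∈ orbEB E X B x y ↔ orbEB E X B u v = orbEB E X B x y :=
  ⟨orbEB_eq_of_mem, fun h => h ▸ mem_orbEB_self B u v⟩

lemma snd_mem_XA_of_mem_orbEB {B C : Submodule (ZMod 2) E} {x y : X} (hy : y ∈ XA E X C)
    {q : X × X} (hq : q ∈ orbEB E X B x y) : q.2 ∈ XA E X C := by
  obtain ⟨e, b, -, rfl⟩ := hq
  exact (vadd_mem_XA_iff e y).2 hy

lemma p1_orbEB (B : Submodule (ZMod 2) E) (x y : X) : p1 X (orbEB E X B x y) = orb E X x := by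
  ext u
  constructor
  · rintro ⟨_, ⟨e, b, -, rfl⟩, rfl⟩
    exact ⟨e + b, rfl⟩
  · rintro ⟨e, rfl⟩
    exact ⟨_, ⟨e, 0, B.zero_mem, rfl⟩, by simp⟩

lemma orb_eq_of_mem {x y : X} (h : y ∈ orb E X x) : orb E X y = orb E X x := by
  obtain ⟨e, rfl⟩ := h
  ext u
  constructor
  · rintro ⟨f, rfl⟩
    exact ⟨f + e, (add_vadd f e x).symm⟩
  · rintro ⟨f, rfl⟩
    exact ⟨f - e, by rw [vadd_vadd, sub_add_cancel]⟩

lemma orb2_eq_orbEB {B : Submodule (ZMod 2) E} {x y : X} (hy : y ∈ XA E X B) :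
    orb2 E X x y = orbEB E X B x y := by
  ext ⟨u, v⟩
  rw [mem_orbEB]
  constructor
  · rintro ⟨e, h⟩
    obtain ⟨rfl, rfl⟩ := Prod.mk.inj h
    exact ⟨e, 0, B.zero_mem, by rw [add_zero], rfl⟩
  · rintro ⟨e, b, hb, rfl, rfl⟩
    refine ⟨e + b, Prod.ext rfl ?_⟩
    show e +ᵥ y = (e + b) +ᵥ y
    rw [add_vadd, vadd_eq_self_of_mem hy hb]

lemma mem_orb2_self (x y : X) : (x, y) ∈ orb2 E X x y :=
  ⟨0, by simp⟩

lemma vadd_mem_orb2_iff {x y u v : X} (e : E) :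
    (e +ᵥ u, e +ᵥ v) ∈ orb2 E X x y ↔ (u, v) ∈ orb2 E X x y := by
  simp only [orb2, Set.mem_ofPred_eq, Prod.mk.injEq]
  constructor
  · rintro ⟨f, hu, hv⟩
    exact ⟨-e + f, by rw [add_vadd, ← hu, neg_vadd_vadd],
      by rw [add_vadd, ← hv, neg_vadd_vadd]⟩
  · rintro ⟨f, rfl, rfl⟩
    exact ⟨e + f, (add_vadd e f x).symm, (add_vadd e f y).symm⟩

lemma mem_orbEB_of_mem_orb2 {B : Submodule (ZMod 2) E} {x y z u v w : X}
    (hy : y ∈ XA E X B) (huv : (u, v) ∈ orb2 E X x y) (hvw : (v, w) ∈ orb2 E X y z) :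
    (u, w) ∈ orbEB E X B x z := by
  obtain ⟨e, h⟩ := huv
  obtain ⟨e', h'⟩ := hvw
  obtain ⟨rfl, rfl⟩ := Prod.mk.inj h
  obtain ⟨he, rfl⟩ := Prod.mk.inj h'
  exact mem_orbEB.2 ⟨e', e - e', sub_mem_of_vadd_eq hy he, by rw [add_sub_cancel], rfl⟩

lemma res_surjective {P Q : Submodule (ZMod 2) E} (h : P ≤ Q) :
    Function.Surjective (res E h) := by
  intro φ
  obtain ⟨ψ, hψ⟩ := LinearMap.exists_extend φ
  exact ⟨ψ ∘ₗ Q.subtype, hψ⟩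

lemma res_add {P Q : Submodule (ZMod 2) E} (h : P ≤ Q) (φ ψ : Dl E Q) :
    res E h (φ + ψ) = res E h φ + res E h ψ :=
  LinearMap.add_comp _ _ _

lemma res_sub {P Q : Submodule (ZMod 2) E} (h : P ≤ Q) (φ ψ : Dl E Q) :
    res E h (φ - ψ) = res E h φ - res E h ψ :=
  LinearMap.sub_comp _ _ _

lemma exists_res_eq_zero_and_res_eq (A B C D : Submodule (ZMod 2) E) (δ : Dl E (A ⊓ D))
    (hδ : res E (leAC E A B D) δ = 0) :
    ∃ δ₁ : Dl E (A ⊓ C), res E (leAC E A B C) δ₁ = 0 ∧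
      res E (leAB E A C D) δ₁ = res E (leAC E A C D) δ := by
  obtain ⟨ψ, hψP, hψQ⟩ := exists_extend_eq_zero_on_of_eq_zero_on_inf
    (P := A ⊓ B ⊓ C) (res E (leAC E A C D) δ) fun v hv =>
      LinearMap.congr_fun hδ ⟨v, hv.1, v.2.2⟩
  exact ⟨ψ ∘ₗ (A ⊓ C).subtype, LinearMap.ext fun v => hψP v v.2,
    LinearMap.ext fun v => LinearMap.congr_fun hψQ v⟩

lemma conv_apply (A B C : Submodule (ZMod 2) E) (f₁ : (X × X) × Dl E (A ⊓ B) → ℂ)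
    (f₂ : (X × X) × Dl E (B ⊓ C) → ℂ) (x z : X) (ε : Dl E (A ⊓ C)) :
    conv E X A B C f₁ f₂ ((x, z), ε) =
      (∑ y, ∑ ε₁, ∑ ε₂, if y ∈ XA E X B ∧ res E (leAB E A B C) ε₁
          + res E (leBC E A B C) ε₂ + res E (leAC E A B C) ε = 0
        then f₁ ((x, y), ε₁) * f₂ ((y, z), ε₂) else 0) *
        (Nat.card ↥(A ⊓ B ⊓ C) : ℂ) / (Nat.card ↥(A ⊓ C) : ℂ) := by
  simp only [conv, finsum_eq_sum_of_fintype, finsum_eq_if, ite_and]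
  congr 2
  refine Finset.sum_congr rfl fun y _ => ?_
  split_ifs <;> simp

lemma conv_add_left (A B C : Submodule (ZMod 2) E) (f f' : (X × X) × Dl E (A ⊓ B) → ℂ)
    (g : (X × X) × Dl E (B ⊓ C) → ℂ) :
    conv E X A B C (f + f') g = conv E X A B C f g + conv E X A B C f' g := by
  ext ⟨⟨x, z⟩, ε⟩
  simp only [conv_apply, Pi.add_apply, add_mul, ite_add_zero, Finset.sum_add_distrib, add_div]

lemma conv_add_right (A B C : Submodule (ZMod 2) E) (f : (X × X) × Dl E (A ⊓ B) → ℂ)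
    (g g' : (X × X) × Dl E (B ⊓ C) → ℂ) :
    conv E X A B C f (g + g') = conv E X A B C f g + conv E X A B C f g' := by
  ext ⟨⟨x, z⟩, ε⟩
  simp only [conv_apply, Pi.add_apply, mul_add, ite_add_zero, Finset.sum_add_distrib, add_mul,
    add_div]

lemma conv_smul_left (A B C : Submodule (ZMod 2) E) (c : ℂ)
    (f : (X × X) × Dl E (A ⊓ B) → ℂ) (g : (X × X) × Dl E (B ⊓ C) → ℂ) :
    conv E X A B C (c • f) g = c • conv E X A B C f g := by
  ext ⟨⟨x, z⟩, ε⟩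
  simp only [conv_apply, Pi.smul_apply, smul_eq_mul, mul_assoc, ← mul_ite_zero,
    ← Finset.mul_sum, mul_div_assoc]

lemma conv_smul_right (A B C : Submodule (ZMod 2) E) (c : ℂ)
    (f : (X × X) × Dl E (A ⊓ B) → ℂ) (g : (X × X) × Dl E (B ⊓ C) → ℂ) :
    conv E X A B C f (c • g) = c • conv E X A B C f g := by
  ext ⟨⟨x, z⟩, ε⟩
  simp only [conv_apply, Pi.smul_apply, smul_eq_mul, mul_left_comm _ c, ← mul_ite_zero,
    ← Finset.mul_sum, mul_assoc, mul_div_assoc]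

lemma conv_zero_left (A B C : Submodule (ZMod 2) E) (g : (X × X) × Dl E (B ⊓ C) → ℂ) :
    conv E X A B C 0 g = 0 := by
  simpa using conv_smul_left A B C 0 0 g

lemma conv_zero_right (A B C : Submodule (ZMod 2) E) (f : (X × X) × Dl E (A ⊓ B) → ℂ) :
    conv E X A B C f 0 = 0 := by
  simpa using conv_smul_right A B C 0 f 0

lemma mulFF_apply (g h : FF E X) (A C : Submodule (ZMod 2) E) :
    mulFF E X g h A C = ∑ B, conv E X A B C (g A B) (h B C) :=
  finsum_eq_sum_of_fintype _

variable (E X) in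
def mulₗ : FF E X →ₗ[ℂ] FF E X →ₗ[ℂ] FF E X :=
  LinearMap.mk₂ ℂ (mulFF E X)
    (fun g g' h => by ext A C : 2; simp [mulFF_apply, conv_add_left, Finset.sum_add_distrib])
    (fun c g h => by ext A C : 2; simp [mulFF_apply, conv_smul_left, Finset.smul_sum])
    (fun g h h' => by ext A C : 2; simp [mulFF_apply, conv_add_right, Finset.sum_add_distrib])
    (fun c g h => by ext A C : 2; simp [mulFF_apply, conv_smul_right, Finset.smul_sum])

lemma emb_self (A B : Submodule (ZMod 2) E) (f : (X × X) × Dl E (A ⊓ B) → ℂ) :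
    emb E X A B f A B = f := by
  ext p
  simp [emb]

lemma emb_of_ne {A B A' B' : Submodule (ZMod 2) E} (f : (X × X) × Dl E (A ⊓ B) → ℂ)
    (h : ¬(A = A' ∧ B = B')) : emb E X A B f A' B' = 0 := by
  ext p
  simp [emb, h]

variable (E X) in
def embₗ (A B : Submodule (ZMod 2) E) :
    ((X × X) × Dl E (A ⊓ B) → ℂ) →ₗ[ℂ] FF E X where
  toFun := emb E X A B
  map_add' f f' := by
    ext A' B' p
    by_cases h : A = A' ∧ B = B' <;> simp [emb, h]
  map_smul' c f := by
    ext A' B' p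
    by_cases h : A = A' ∧ B = B' <;> simp [emb, h]

lemma emb_mem_FFsub {A B : Submodule (ZMod 2) E} {f : (X × X) × Dl E (A ⊓ B) → ℂ}
    (hf : MemF E X A B f) : emb E X A B f ∈ FFsub E X := by
  intro A' B'
  by_cases h : A = A' ∧ B = B'
  · obtain ⟨rfl, rfl⟩ := h
    rwa [emb_self]
  · rw [emb_of_ne f h]
    exact (FAB E X A' B').zero_mem

lemma mulFF_emb_left (A C : Submodule (ZMod 2) E) (b : (X × X) × Dl E (A ⊓ C) → ℂ)
    (f : FF E X) :
    mulFF E X (emb E X A C b) f = ∑ D, emb E X A D (conv E X A C D b (f C D)) := by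
  ext A' D' : 2
  rw [mulFF_apply, Finset.sum_apply, Finset.sum_apply]
  by_cases hA : A = A'
  · subst hA
    rw [Finset.sum_eq_single C, Finset.sum_eq_single D', emb_self, emb_self]
    · exact fun D _ hD => emb_of_ne _ fun h => hD h.2
    · simp
    · intro B _ hB
      rw [emb_of_ne b fun h => hB h.2.symm, conv_zero_left]
    · simp
  · simp [emb_of_ne _ fun h : A = A' ∧ _ => hA h.1, conv_zero_left]

lemma mulFF_emb_emb (A B C : Submodule (ZMod 2) E) (b : (X × X) × Dl E (A ⊓ B) → ℂ)
    (f : (X × X) × Dl E (B ⊓ C) → ℂ) :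
    mulFF E X (emb E X A B b) (emb E X B C f) = emb E X A C (conv E X A B C b f) := by
  rw [mulFF_emb_left, Finset.sum_eq_single C, emb_self]
  · intro D _ hD
    rw [emb_of_ne f fun h => hD h.2.symm, conv_zero_right]
    exact map_zero (embₗ E X A D)
  · simp

lemma exists_of_conv_ne_zero {A B C : Submodule (ZMod 2) E}
    {f₁ : (X × X) × Dl E (A ⊓ B) → ℂ} {f₂ : (X × X) × Dl E (B ⊓ C) → ℂ}
    {x z : X} {ε : Dl E (A ⊓ C)} (h : conv E X A B C f₁ f₂ ((x, z), ε) ≠ 0) :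
    ∃ y ε₁ ε₂, y ∈ XA E X B ∧
      res E (leAB E A B C) ε₁ + res E (leBC E A B C) ε₂ + res E (leAC E A B C) ε = 0 ∧
      f₁ ((x, y), ε₁) ≠ 0 ∧ f₂ ((y, z), ε₂) ≠ 0 := by
  rw [conv_apply] at h
  obtain ⟨y, -, h⟩ :=
    Finset.exists_ne_zero_of_sum_ne_zero (left_ne_zero_of_mul (div_ne_zero_iff.1 h).1)
  obtain ⟨ε₁, -, h⟩ := Finset.exists_ne_zero_of_sum_ne_zero h
  obtain ⟨ε₂, -, h⟩ := Finset.exists_ne_zero_of_sum_ne_zero h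
  obtain ⟨⟨hy, hε⟩, h⟩ := ite_ne_right_iff.1 h
  exact ⟨y, ε₁, ε₂, hy, hε, mul_ne_zero_iff.1 h⟩

lemma natCard_ne_zero (P : Submodule (ZMod 2) E) : (Nat.card P : ℂ) ≠ 0 :=
  Nat.cast_ne_zero.2 Nat.card_pos.ne'

open scoped ComplexOrder in
lemma conv_ne_zero {A B C : Submodule (ZMod 2) E} {f₁ : (X × X) × Dl E (A ⊓ B) → ℂ}
    {f₂ : (X × X) × Dl E (B ⊓ C) → ℂ} (hf₁ : 0 ≤ f₁) (hf₂ : 0 ≤ f₂)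
    {x y z : X} {ε : Dl E (A ⊓ C)} {ε₁ : Dl E (A ⊓ B)} {ε₂ : Dl E (B ⊓ C)}
    (hy : y ∈ XA E X B)
    (hε : res E (leAB E A B C) ε₁ + res E (leBC E A B C) ε₂ + res E (leAC E A B C) ε = 0)
    (h₁ : f₁ ((x, y), ε₁) ≠ 0) (h₂ : f₂ ((y, z), ε₂) ≠ 0) :
    conv E X A B C f₁ f₂ ((x, z), ε) ≠ 0 := by
  have hterm (y' ε₁' ε₂') : 0 ≤ if y' ∈ XA E X B ∧ res E (leAB E A B C) ε₁'
      + res E (leBC E A B C) ε₂' + res E (leAC E A B C) ε = 0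
      then f₁ ((x, y'), ε₁') * f₂ ((y', z), ε₂') else 0 := by
    split_ifs
    exacts [mul_nonneg (hf₁ _) (hf₂ _), le_rfl]
  have hpos : 0 < f₁ ((x, y), ε₁) * f₂ ((y, z), ε₂) :=
    mul_pos ((hf₁ _).lt_of_ne' h₁) ((hf₂ _).lt_of_ne' h₂)
  rw [conv_apply]
  refine div_ne_zero (mul_ne_zero (ne_of_gt ?_) (natCard_ne_zero _)) (natCard_ne_zero _)
  refine Finset.sum_pos' (fun _ _ => Finset.sum_nonneg fun _ _ => Finset.sum_nonneg fun _ _ =>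
    hterm _ _ _) ⟨y, Finset.mem_univ _, ?_⟩
  refine Finset.sum_pos' (fun _ _ => Finset.sum_nonneg fun _ _ => hterm _ _ _)
    ⟨ε₁, Finset.mem_univ _, ?_⟩
  refine Finset.sum_pos' (fun _ _ => hterm _ _ _) ⟨ε₂, Finset.mem_univ _, ?_⟩
  rwa [if_pos ⟨hy, hε⟩]

lemma bSum_apply (A B C : Submodule (ZMod 2) E) (M : Set (X × X)) (α : Dl E (A ⊓ B ⊓ C))
    (q : X × X) (ε : Dl E (A ⊓ C)) :
    bSum E X A B C M α (q, ε) = if q ∈ M ∧ res E (leAC E A B C) ε = α then 1 else 0 := by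
  simp only [bSum, finsum_eq_sum_of_fintype, finsum_eq_if, Finset.sum_apply,
    apply_ite (fun f : (X × X) × Dl E (A ⊓ C) → ℂ => f (q, ε)), br, Pi.zero_apply]
  rw [Fintype.sum_eq_single ε fun c hc => by simp [hc.symm]]
  by_cases hq : q ∈ M <;> simp [hq]

/-- Constancy on the sets `𝓜 × α̃` that support the elements of `𝓑_{oBC}`. -/
def IsOrbEBInvariant (A B C : Submodule (ZMod 2) E) (g : (X × X) × Dl E (A ⊓ C) → ℂ) :
    Prop :=
  ∀ ⦃q q' : X × X⦄ ⦃ε ε' : Dl E (A ⊓ C)⦄, q' ∈ orbEB E X B q.1 q.2 →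
    res E (leAC E A B C) ε' = res E (leAC E A B C) ε → g (q', ε') = g (q, ε)

lemma isOrbEBInvariant_bSum (A B C : Submodule (ZMod 2) E) (x y : X) (α : Dl E (A ⊓ B ⊓ C)) :
    IsOrbEBInvariant A B C (bSum E X A B C (orbEB E X B x y) α) := by
  rintro ⟨u, v⟩ ⟨u', v'⟩ ε ε' hq hε
  simp only [bSum_apply, hε, mem_orbEB_iff_eq (u := u'), mem_orbEB_iff_eq (u := u),
    orbEB_eq_of_mem hq]

lemma IsOrbEBInvariant.conv {A B C D : Submodule (ZMod 2) E}
    {g : (X × X) × Dl E (A ⊓ C) → ℂ} (hg : IsOrbEBInvariant A B C g)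
    {f : (X × X) × Dl E (C ⊓ D) → ℂ} (hf : MemF E X C D f) :
    IsOrbEBInvariant A B D (conv E X A C D g f) := by
  rintro ⟨x, w⟩ ⟨x', w'⟩ ε ε' hq hε
  obtain ⟨e, b, hb, rfl, rfl⟩ := mem_orbEB.1 hq
  obtain ⟨δ, hδB, hδD⟩ := exists_res_eq_zero_and_res_eq A B C D (ε - ε')
    (by rw [res_sub, hε, sub_self])
  rw [conv_apply, conv_apply]
  congr 2
  symm
  refine Fintype.sum_equiv (AddAction.toPerm e) _ _ fun y => ?_
  refine Fintype.sum_equiv (Equiv.addRight δ) _ _ fun ε₁ =>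
    Finset.sum_congr rfl fun ε₂ _ => ?_
  have hcond : res E (leAB E A C D) (ε₁ + δ) + res E (leBC E A C D) ε₂
      + res E (leAC E A C D) ε'
      = res E (leAB E A C D) ε₁ + res E (leBC E A C D) ε₂ + res E (leAC E A C D) ε := by
    rw [res_add, hδD, res_sub]
    abel
  have hgδ : g (((e + b) +ᵥ x, e +ᵥ y), ε₁ + δ) = g ((x, y), ε₁) :=
    hg (mem_orbEB.2 ⟨e, b, hb, rfl, rfl⟩) (by rw [res_add, hδB, add_zero])
  simp only [AddAction.toPerm_apply, Equiv.coe_addRight, vadd_mem_XA_iff, hcond, hgδ, hf.2]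

structure IsOBKernel (A B C : Submodule (ZMod 2) E) (o : Set X)
    (g : (X × X) × Dl E (A ⊓ C) → ℂ) : Prop where
  support : ∀ q ε, g (q, ε) ≠ 0 → q.1 ∈ o ∧ q.2 ∈ XA E X C
  invariant : IsOrbEBInvariant A B C g

lemma isOBKernel_bSum {A B C : Submodule (ZMod 2) E} {o : Set X} {M : Set (X × X)}
    (hM : IsOrbEB E X A B C M) (hMo : p1 X M = o) (α : Dl E (A ⊓ B ⊓ C)) :
    IsOBKernel A B C o (bSum E X A B C M α) := by
  obtain ⟨x, y, -, hy, rfl⟩ := hM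
  refine ⟨fun q ε h => ?_, isOrbEBInvariant_bSum A B C x y α⟩
  rw [bSum_apply, ite_ne_right_iff] at h
  exact ⟨hMo ▸ ⟨q, h.1.1, rfl⟩, snd_mem_XA_of_mem_orbEB hy h.1.1⟩

lemma IsOBKernel.conv {A B C D : Submodule (ZMod 2) E} {o : Set X}
    {g : (X × X) × Dl E (A ⊓ C) → ℂ} (hg : IsOBKernel A B C o g)
    {f : (X × X) × Dl E (C ⊓ D) → ℂ} (hf : MemF E X C D f) :
    IsOBKernel A B D o (conv E X A C D g f) := by
  refine ⟨fun ⟨x, w⟩ ε h => ?_, hg.invariant.conv hf⟩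
  obtain ⟨y, ε₁, ε₂, -, -, hg₁, hf₂⟩ := exists_of_conv_ne_zero h
  exact ⟨(hg.support _ _ hg₁).1, (not_imp_comm.1 (hf.1 ((y, w), ε₂)) hf₂).2⟩

lemma IsOBKernel.emb_mem_ooB {A B D : Submodule (ZMod 2) E} {o : Set X}
    (ho : ∃ x ∈ XA E X A, o = orb E X x) {g : (X × X) × Dl E (A ⊓ D) → ℂ}
    (hg : IsOBKernel A B D o g) : emb E X A D g ∈ ooB E X A B o := by
  obtain ⟨x₀, hx₀, rfl⟩ := ho
  have : Nonempty X := ⟨x₀⟩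
  let cls : (X × X) × Dl E (A ⊓ D) → Set (X × X) × Dl E (A ⊓ B ⊓ D) :=
    fun p => (orbEB E X B p.1.1 p.1.2, res E (leAC E A B D) p.2)
  let U : Set ((X × X) × Dl E (A ⊓ D)) := {p | p.1.1 ∈ orb E X x₀ ∧ p.1.2 ∈ XA E X D}
  let T := (Finset.univ.filter (· ∈ U)).image cls
  let rep := Function.invFunOn cls U
  have hT {t} : t ∈ T ↔ ∃ p ∈ U, cls p = t := by simp [T]
  have hsum : g = ∑ t ∈ T, g (rep t) • bSum E X A B D t.1 t.2 := by
    ext ⟨⟨u, v⟩, ε⟩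
    have hterm : ∀ t ∈ T, (g (rep t) • bSum E X A B D t.1 t.2) ((u, v), ε) =
        if cls ((u, v), ε) = t then g (rep t) else 0 := by
      intro t ht
      obtain ⟨p, -, rfl⟩ := hT.1 ht
      simp only [Pi.smul_apply, smul_eq_mul, bSum_apply, cls, Prod.ext_iff, mem_orbEB_iff_eq]
      split_ifs <;> simp
    rw [Finset.sum_apply, Finset.sum_congr rfl hterm, Finset.sum_ite_eq]
    split_ifs with hp
    · obtain ⟨hq, hε⟩ := Prod.ext_iff.1 (Function.invFunOn_eq (hT.1 hp))
      exact (hg.invariant (mem_orbEB_iff_eq.2 hq) hε).symm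
    · by_contra h
      exact hp (hT.2 ⟨_, hg.support _ _ h, rfl⟩)
  have hmem {t} (ht : t ∈ T) :
      emb E X A D (bSum E X A B D t.1 t.2) ∈ ooB E X A B (orb E X x₀) := by
    obtain ⟨⟨⟨x, w⟩, ε⟩, ⟨⟨e, rfl⟩, hw⟩, rfl⟩ := hT.1 ht
    refine Submodule.subset_span (Set.mem_iUnion.2
      ⟨D, _, _, ⟨_, w, (vadd_mem_XA_iff e x₀).2 hx₀, hw, rfl⟩, ?_, rfl⟩)
    rw [p1_orbEB, orb_eq_of_mem ⟨e, rfl⟩]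
  change embₗ E X A D g ∈ _
  rw [hsum, map_sum]
  exact Submodule.sum_mem _ fun t ht => by rw [map_smul]; exact Submodule.smul_mem _ _ (hmem ht)

lemma mulFF_emb_mem_ooB {A B C : Submodule (ZMod 2) E} {o : Set X}
    (ho : ∃ x ∈ XA E X A, o = orb E X x) {b : (X × X) × Dl E (A ⊓ C) → ℂ}
    (hb : IsOBKernel A B C o b) {f : FF E X} (hf : f ∈ FFsub E X) :
    mulFF E X (emb E X A C b) f ∈ ooB E X A B o := by
  rw [mulFF_emb_left]
  exact Submodule.sum_mem _ fun D _ => (hb.conv (hf C D)).emb_mem_ooB ho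

lemma mulFF_mem_ooB {A B : Submodule (ZMod 2) E} {o : Set X}
    (ho : ∃ x ∈ XA E X A, o = orb E X x) {m f : FF E X} (hm : m ∈ ooB E X A B o)
    (hf : f ∈ FFsub E X) : mulFF E X m f ∈ ooB E X A B o := by
  suffices ooB E X A B o ≤ (ooB E X A B o).comap ((mulₗ E X).flip f) from this hm
  refine Submodule.span_le.2 ?_
  rintro _ ⟨_, ⟨C, rfl⟩, M, α, hM, hMo, rfl⟩
  exact mulFF_emb_mem_ooB ho (isOBKernel_bSum hM hMo α) hf

lemma br_orb2_eq_bSum {A B : Submodule (ZMod 2) E} {x y : X} (hy : y ∈ XA E X B)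
    (ε₁ : Dl E (A ⊓ B)) :
    br E X A B (orb2 E X x y) ε₁ =
      bSum E X A B B (orbEB E X B x y) (res E (leAC E A B B) ε₁) := by
  have hres : Function.Injective (res E (leAC E A B B)) := fun ε ε' h =>
    LinearMap.ext fun u => LinearMap.congr_fun h ⟨u, u.2, u.2.2⟩
  ext ⟨q, ε⟩
  simp only [br, bSum_apply, orb2_eq_orbEB hy, hres.eq_iff]

lemma memF_indicator_orb2 {B C : Submodule (ZMod 2) E} {y z : X} (hy : y ∈ XA E X B)
    (hz : z ∈ XA E X C) (P : Dl E (B ⊓ C) → Prop) [DecidablePred P] :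
    MemF E X B C (fun p => if p.1 ∈ orb2 E X y z ∧ P p.2 then 1 else 0) := by
  refine ⟨fun p hp => if_neg fun h => hp ?_, fun e u v ε => by simp only [vadd_mem_orb2_iff]⟩
  obtain ⟨e, he⟩ := h.1
  rw [he]
  exact ⟨(vadd_mem_XA_iff e y).2 hy, (vadd_mem_XA_iff e z).2 hz⟩

lemma IsOrbEBInvariant.eq_smul_bSum {A B C : Submodule (ZMod 2) E}
    {g : (X × X) × Dl E (A ⊓ C) → ℂ} (hg : IsOrbEBInvariant A B C g) {x z : X}
    {α : Dl E (A ⊓ B ⊓ C)}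
    (hsupp : ∀ q ε, g (q, ε) ≠ 0 → q ∈ orbEB E X B x z ∧ res E (leAC E A B C) ε = α)
    {ε₀ : Dl E (A ⊓ C)} (hε₀ : res E (leAC E A B C) ε₀ = α) :
    g = g ((x, z), ε₀) • bSum E X A B C (orbEB E X B x z) α := by
  ext ⟨q, ε⟩
  rw [Pi.smul_apply, bSum_apply, smul_eq_mul]
  split_ifs with h
  · rw [mul_one, hg (q := (x, z)) h.1 (h.2.trans hε₀.symm)]
  · rw [mul_zero]
    exact not_imp_comm.1 (hsupp q ε) h

open scoped ComplexOrder in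
lemma exists_memF_conv_br_eq_bSum {A B C : Submodule (ZMod 2) E} {x y z : X}
    (hy : y ∈ XA E X B) (hz : z ∈ XA E X C) (ε₁ : Dl E (A ⊓ B))
    (α : Dl E (A ⊓ B ⊓ C)) :
    ∃ f, MemF E X B C f ∧
      conv E X A B C (br E X A B (orb2 E X x y) ε₁) f = bSum E X A B C (orbEB E X B x z) α := by
  -- for `ε₂` over `β`, the condition `ε₁ + ε₂ + ε = 0` on `A∩B∩C` in `⋆` becomes `ε ∈ α̃`
  set β := -(res E (leAB E A B C) ε₁ + α)
  obtain ⟨ε₂, hε₂⟩ := res_surjective (leBC E A B C) β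
  obtain ⟨ε₀, hε₀⟩ := res_surjective (leAC E A B C) α
  set f₀ : (X × X) × Dl E (B ⊓ C) → ℂ :=
    fun p => if p.1 ∈ orb2 E X y z ∧ res E (leBC E A B C) p.2 = β then 1 else 0
  have hf₀ : MemF E X B C f₀ := memF_indicator_orb2 hy hz (res E (leBC E A B C) · = β)
  set g := conv E X A B C (br E X A B (orb2 E X x y) ε₁) f₀
  have hinv : IsOrbEBInvariant A B C g := by
    simp only [g, br_orb2_eq_bSum hy]
    exact (isOrbEBInvariant_bSum A B B x y _).conv hf₀
  have hsupp (q ε) (h : g (q, ε) ≠ 0) :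
      q ∈ orbEB E X B x z ∧ res E (leAC E A B C) ε = α := by
    obtain ⟨v, ε₁', ε₂', -, hcond, h₁, h₂⟩ := exists_of_conv_ne_zero h
    obtain ⟨huv, rfl⟩ := (ite_ne_right_iff.1 h₁).1
    obtain ⟨hvw, hβ⟩ := (ite_ne_right_iff.1 h₂).1
    refine ⟨mem_orbEB_of_mem_orb2 hy huv hvw, sub_eq_zero.1 ?_⟩
    rw [← hcond, hβ]
    simp only [β]
    abel
  have hne : g ((x, z), ε₀) ≠ 0 := by
    refine conv_ne_zero (fun p => ?_) (fun p => ?_) hy (ε₁ := ε₁) (ε₂ := ε₂) ?_ ?_ ?_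
    · simp only [br, Pi.zero_apply]
      split_ifs <;> simp
    · simp only [f₀, Pi.zero_apply]
      split_ifs <;> simp
    · rw [hε₂, hε₀]
      simp only [β]
      abel
    · simp [br, mem_orb2_self]
    · simp [f₀, mem_orb2_self, hε₂]
  refine ⟨(g ((x, z), ε₀))⁻¹ • f₀, (FAB E X B C).smul_mem _ hf₀, ?_⟩
  calc conv E X A B C (br E X A B (orb2 E X x y) ε₁) ((g ((x, z), ε₀))⁻¹ • f₀)
      = (g ((x, z), ε₀))⁻¹ • g := conv_smul_right _ _ _ _ _ _
    _ = (g ((x, z), ε₀))⁻¹ • (g ((x, z), ε₀) • bSum E X A B C (orbEB E X B x z) α) :=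
      congrArg _ (hinv.eq_smul_bSum hsupp hε₀)
    _ = bSum E X A B C (orbEB E X B x z) α := by rw [smul_smul, inv_mul_cancel₀ hne, one_smul]

lemma emb_br_orb2_mem_ooB {A B : Submodule (ZMod 2) E} {o : Set X} {x y : X}
    (hx : x ∈ XA E X A) (hy : y ∈ XA E X B) (hO : p1 X (orb2 E X x y) = o)
    (ε₁ : Dl E (A ⊓ B)) :
    emb E X A B (br E X A B (orb2 E X x y) ε₁) ∈ ooB E X A B o := by
  rw [br_orb2_eq_bSum hy]
  refine Submodule.subset_span (Set.mem_iUnion.2 ⟨B, _, _, ⟨x, y, hx, hy, rfl⟩, ?_, rfl⟩)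
  rwa [← orb2_eq_orbEB hy]

lemma exists_mulFF_br_eq_emb_bSum {A B C : Submodule (ZMod 2) E} {x y : X} (hy : y ∈ XA E X B)
    {M : Set (X × X)} (hM : IsOrbEB E X A B C M) (hxM : x ∈ p1 X M) (ε₁ : Dl E (A ⊓ B))
    (α : Dl E (A ⊓ B ⊓ C)) :
    ∃ f ∈ FFsub E X, mulFF E X (emb E X A B (br E X A B (orb2 E X x y) ε₁)) f =
      emb E X A C (bSum E X A B C M α) := by
  obtain ⟨x₁, z₁, -, hz₁, rfl⟩ := hM
  obtain ⟨⟨x', z⟩, hq, rfl⟩ := hxM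
  obtain ⟨f₀, hf₀, hconv⟩ :=
    exists_memF_conv_br_eq_bSum (x := x') hy (snd_mem_XA_of_mem_orbEB hz₁ hq) ε₁ α
  refine ⟨emb E X B C f₀, emb_mem_FFsub hf₀, ?_⟩
  rw [mulFF_emb_emb, hconv, orbEB_eq_of_mem hq]

end

/-- Theorem 1.6(a): `[[oB]]` is a right ideal of `(𝓕, ⋆)`; more
precisely `[[oB]] = [𝒪]^{ε₁} ⋆ 𝓕` for any `E`-orbit `𝒪 ⊆ X²_{AB}` with `p₁𝒪 = o`
and any `ε₁ ∈ (A∩B)*`. -/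
theorem statement13 (A B : Submodule (ZMod 2) E) (o : Set X)
    (ho : ∃ x ∈ XA E X A, o = orb E X x) :
    (∀ m ∈ ooB E X A B o, ∀ f ∈ FFsub E X, mulFF E X m f ∈ ooB E X A B o) ∧
    ∀ O : Set (X × X), IsOrb2 E X A B O → p1 X O = o → ∀ ε₁ : Dl E (A ⊓ B),
      (ooB E X A B o : Set (FF E X)) =
        (fun f => mulFF E X (emb E X A B (br E X A B O ε₁)) f) ''
          (FFsub E X : Set (FF E X)) := by
  refine ⟨fun m hm f hf => mulFF_mem_ooB ho hm hf, ?_⟩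
  rintro O ⟨x, y, hx, hy, rfl⟩ hO ε₁
  apply subset_antisymm
  · suffices ooB E X A B o ≤
        (FFsub E X).map (mulₗ E X (emb E X A B (br E X A B (orb2 E X x y) ε₁))) from
      fun m hm => this hm
    refine Submodule.span_le.2 ?_
    rintro _ ⟨_, ⟨C, rfl⟩, M, α, hM, hMo, rfl⟩
    have hxM : x ∈ p1 X M := hMo ▸ hO ▸ ⟨_, mem_orb2_self x y, rfl⟩
    exact exists_mulFF_br_eq_emb_bSum hy hM hxM ε₁ α
  · rintro _ ⟨f, hf, rfl⟩
    exact mulFF_mem_ooB ho (emb_br_orb2_mem_ooB hx hy hO ε₁) hf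

end Lusztig
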